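/- Since λ ≥ 0, the performance difference lemma implies the lower bound η_{π̃} ≥ η_π + (1-γ) E_{τ|π̃}[∑_t γ^t A^λ_π(s_t,a_t)]. -/

import Mathlib

/-!
For the state-action chain `M` of a policy, the discounted occupancy matrix `D = ∑ₜ γ^t M^t` is
the inverse of `1 - γ M`: Q-functions are `D f`, the Bellman equation is `(1 - γ M) D f = f`, and
`D (1 - γ M) g = g` telescopes. Writing `f = A_π f + (V_π f - γ P V_π f)` and applying `D` along
`π̃` gives the performance difference lemma `E_{π̃}[f] = E_π[f] + E_{π̃}[A_π f]`, hence
`J_π̃ - J_π = (1 - γ) E_{π̃}[A_π]`, and, for the reward `(R - J_π)²` whose advantage is `X - W`,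
the same for the second moment about `J_π`. That moment exceeds the variance `ν²_π̃` about the
mean `J_π̃` by `(J_π̃ - J_π)²`, so `η_π̃ = η_π + (1 - γ) E_{π̃}[A^λ_π] + λ (J_π̃ - J_π)²`.
-/

open Finset

/-- t-step iterate of a transition kernel on a finite space. -/
noncomputable def kerPow {T : Type*} [Fintype T] [DecidableEq T] (K : T → T → ℝ) :
    ℕ → T → T → ℝ
  | 0 => fun s s' => if s = s' then 1 else 0
  | (t + 1) => fun s s' => ∑ u, K s u * kerPow K t u s'

/-- State-action transition kernel induced by the MDP dynamics `P` and the policy `π`. -/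
def saKer {S A : Type*} (P : S → A → S → ℝ) (π : S → A → ℝ) :
    S × A → S × A → ℝ :=
  fun p q => P p.1 p.2 q.1 * π q.1 q.2

/-- Expected discounted sum of `f(s_t, a_t)` starting from `(s,a)`, following `π`. -/
noncomputable def Qgen {S A : Type*} [Fintype S] [Fintype A] [DecidableEq S] [DecidableEq A]
    (P : S → A → S → ℝ) (π : S → A → ℝ) (f : S → A → ℝ) (γ : ℝ) (s : S) (a : A) : ℝ :=
  ∑' t : ℕ, γ ^ t * ∑ p : S × A, kerPow (saKer P π) t (s, a) p * f p.1 p.2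

/-- Expected discounted sum `E_{τ|π}[∑ₜ γ^t f(s_t,a_t)]` over trajectories started
from the initial distribution `μ` and following `π`. -/
noncomputable def expDisc {S A : Type*} [Fintype S] [Fintype A] [DecidableEq S] [DecidableEq A]
    (P : S → A → S → ℝ) (π : S → A → ℝ) (μ : S → ℝ) (γ : ℝ) (f : S → A → ℝ) : ℝ :=
  ∑ s, μ s * ∑ a, π s a * Qgen P π f γ s a

open Matrix

lemma kerPow_eq_pow {T : Type*} [Fintype T] [DecidableEq T] (K : T → T → ℝ) (t : ℕ) :
    kerPow K t = of K ^ t := by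
  induction t with
  | zero => ext x y; simp [kerPow, one_apply]
  | succ t ih => ext x y; simp [kerPow, pow_succ', mul_apply, ih]

lemma saKer_mulVec {S A : Type*} [Fintype S] [Fintype A] (P : S → A → S → ℝ) (π : S → A → ℝ)
    (g : S × A → ℝ) (s : S) (a : A) :
    (of (saKer P π) *ᵥ g) (s, a) = ∑ s', P s a s' * ∑ a', π s' a' * g (s', a') := by
  simp [mulVec, dotProduct, saKer, Fintype.sum_prod_type, Finset.mul_sum, mul_assoc]

section DiscountedOccupancy

variable {T : Type*} [Fintype T] [DecidableEq T] {M : Matrix T T ℝ} {γ : ℝ}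

noncomputable def discountedOccupancy (M : Matrix T T ℝ) (γ : ℝ) : Matrix T T ℝ :=
  ∑' t : ℕ, γ ^ t • M ^ t

lemma summable_pow_mul_pow_apply (hM : M ∈ rowStochastic ℝ T) (hγ0 : 0 ≤ γ) (hγ1 : γ < 1)
    (x y : T) : Summable fun t : ℕ => γ ^ t * (M ^ t) x y := by
  refine (summable_geometric_of_lt_one hγ0 hγ1).of_nonneg_of_le (fun t => ?_) (fun t => ?_)
  · exact mul_nonneg (pow_nonneg hγ0 t) (nonneg_of_mem_rowStochastic (pow_mem hM t))
  · exact mul_le_of_le_one_right (pow_nonneg hγ0 t) (le_one_of_mem_rowStochastic (pow_mem hM t))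

lemma summable_pow_smul_pow (hM : M ∈ rowStochastic ℝ T) (hγ0 : 0 ≤ γ) (hγ1 : γ < 1) :
    Summable fun t : ℕ => γ ^ t • M ^ t :=
  Pi.summable.2 fun x => Pi.summable.2 fun y => summable_pow_mul_pow_apply hM hγ0 hγ1 x y

lemma discountedOccupancy_apply (hM : M ∈ rowStochastic ℝ T) (hγ0 : 0 ≤ γ) (hγ1 : γ < 1)
    (x y : T) : discountedOccupancy M γ x y = ∑' t : ℕ, γ ^ t * (M ^ t) x y := by
  have hs := summable_pow_smul_pow hM hγ0 hγ1
  have hrow := tsum_apply (f := fun t : ℕ => ((γ ^ t • M ^ t : Matrix T T ℝ) : T → T → ℝ))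
    (x := x) hs
  exact (congrFun hrow y).trans (tsum_apply (Pi.summable.1 hs x))

lemma discountedOccupancy_mul_one_sub (hM : M ∈ rowStochastic ℝ T) (hγ0 : 0 ≤ γ) (hγ1 : γ < 1) :
    discountedOccupancy M γ * (1 - γ • M) = 1 := by
  have hs := summable_pow_smul_pow hM hγ0 hγ1
  have hshift : discountedOccupancy M γ = 1 + γ • (discountedOccupancy M γ * M) := by
    conv_lhs => rw [discountedOccupancy, hs.tsum_eq_zero_add]
    rw [discountedOccupancy, ← hs.tsum_mul_right, ← tsum_const_smul'' γ]
    simp [pow_succ, smul_smul, mul_comm]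
  rw [mul_sub, mul_one, Matrix.mul_smul, sub_eq_iff_eq_add]
  exact hshift

lemma one_sub_mul_discountedOccupancy (hM : M ∈ rowStochastic ℝ T) (hγ0 : 0 ≤ γ) (hγ1 : γ < 1) :
    (1 - γ • M) * discountedOccupancy M γ = 1 :=
  mul_eq_one_comm.1 (discountedOccupancy_mul_one_sub hM hγ0 hγ1)

lemma one_sub_smul_discountedOccupancy_mulVec_one (hM : M ∈ rowStochastic ℝ T) (hγ0 : 0 ≤ γ)
    (hγ1 : γ < 1) : (1 - γ) • (discountedOccupancy M γ *ᵥ 1) = 1 := by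
  have h1 : (1 - γ • M) *ᵥ (1 : T → ℝ) = (1 - γ) • 1 := by
    rw [sub_mulVec, one_mulVec, smul_mulVec, one_vecMul_of_mem_rowStochastic hM, sub_smul, one_smul]
  rw [← mulVec_smul, ← h1, mulVec_mulVec, discountedOccupancy_mul_one_sub hM hγ0 hγ1, one_mulVec]

end DiscountedOccupancy

lemma dotProduct_sq_sub_dotProduct {ι : Type*} [Fintype ι] {w : ι → ℝ} (hw : w ⬝ᵥ 1 = 1)
    (f : ι → ℝ) (c : ℝ) :
    w ⬝ᵥ (fun i => (f i - w ⬝ᵥ f) ^ 2) = w ⬝ᵥ (fun i => (f i - c) ^ 2) - (w ⬝ᵥ f - c) ^ 2 := by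
  set m := w ⬝ᵥ f
  have hsq : (fun i => (f i - m) ^ 2) =
      (fun i => (f i - c) ^ 2) - (2 * (m - c)) • f + (m ^ 2 - c ^ 2) • 1 := by
    ext i
    simp only [Pi.add_apply, Pi.sub_apply, Pi.smul_apply, Pi.one_apply, smul_eq_mul]
    ring
  rw [hsq, dotProduct_add, dotProduct_sub, dotProduct_smul, dotProduct_smul, hw, smul_eq_mul,
    smul_eq_mul]
  ring

section MDP

variable {S A : Type*} [Fintype S] [Fintype A] [DecidableEq S] [DecidableEq A]
  {P : S → A → S → ℝ} {π : S → A → ℝ} {γ : ℝ}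

lemma saKer_mem_rowStochastic (hP0 : ∀ s a s', 0 ≤ P s a s') (hP1 : ∀ s a, ∑ s', P s a s' = 1)
    (hπ0 : ∀ s a, 0 ≤ π s a) (hπ1 : ∀ s, ∑ a, π s a = 1) :
    of (saKer P π) ∈ rowStochastic ℝ (S × A) := by
  refine mem_rowStochastic_iff_sum.2 ⟨fun p q => mul_nonneg (hP0 _ _ _) (hπ0 _ _), fun p => ?_⟩
  simp [saKer, Fintype.sum_prod_type, ← Finset.mul_sum, hπ1, hP1]

lemma uncurry_Qgen (hπ : of (saKer P π) ∈ rowStochastic ℝ (S × A)) (hγ0 : 0 ≤ γ) (hγ1 : γ < 1)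
    (f : S → A → ℝ) :
    Function.uncurry (Qgen P π f γ) =
      discountedOccupancy (of (saKer P π)) γ *ᵥ Function.uncurry f := by
  ext ⟨s, a⟩
  have hs := summable_pow_mul_pow_apply hπ hγ0 hγ1 (s, a)
  simp only [Function.uncurry_apply_pair, Qgen, kerPow_eq_pow, mulVec, dotProduct,
    discountedOccupancy_apply hπ hγ0 hγ1, ← (hs _).tsum_mul_right]
  rw [← Summable.tsum_finsetSum fun q _ => (hs q).mul_right _]
  simp only [Finset.mul_sum, mul_assoc]
  rfl

lemma Qgen_add (hπ : of (saKer P π) ∈ rowStochastic ℝ (S × A)) (hγ0 : 0 ≤ γ) (hγ1 : γ < 1)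
    (f g : S → A → ℝ) (s : S) (a : A) :
    Qgen P π (f + g) γ s a = Qgen P π f γ s a + Qgen P π g γ s a := by
  have h := congrFun (uncurry_Qgen hπ hγ0 hγ1 (f + g)) (s, a)
  rwa [show Function.uncurry (f + g) = Function.uncurry f + Function.uncurry g from rfl,
    mulVec_add, ← uncurry_Qgen hπ hγ0 hγ1, ← uncurry_Qgen hπ hγ0 hγ1] at h

noncomputable def Vgen (P : S → A → S → ℝ) (π : S → A → ℝ) (f : S → A → ℝ) (γ : ℝ) (s : S) : ℝ :=
  ∑ a, π s a * Qgen P π f γ s a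

noncomputable def advantage (P : S → A → S → ℝ) (π : S → A → ℝ) (f : S → A → ℝ) (γ : ℝ) (s : S)
    (a : A) : ℝ :=
  Qgen P π f γ s a - Vgen P π f γ s

lemma Qgen_bellman (hπ : of (saKer P π) ∈ rowStochastic ℝ (S × A)) (hγ0 : 0 ≤ γ)
    (hγ1 : γ < 1) (f : S → A → ℝ) (s : S) (a : A) :
    Qgen P π f γ s a = f s a + γ * ∑ s', P s a s' * Vgen P π f γ s' := by
  have hvec : (1 - γ • of (saKer P π)) *ᵥ Function.uncurry (Qgen P π f γ) = Function.uncurry f := by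
    rw [uncurry_Qgen hπ hγ0 hγ1, mulVec_mulVec, one_sub_mul_discountedOccupancy hπ hγ0 hγ1,
      one_mulVec]
  have h := congrFun hvec (s, a)
  simp only [sub_mulVec, one_mulVec, smul_mulVec, Pi.sub_apply, Pi.smul_apply, saKer_mulVec,
    Function.uncurry_apply_pair, smul_eq_mul] at h
  rw [← h]
  simp only [Vgen]
  ring

lemma Qgen_telescope (hπ : of (saKer P π) ∈ rowStochastic ℝ (S × A))
    (hπ1 : ∀ s, ∑ a, π s a = 1) (hγ0 : 0 ≤ γ) (hγ1 : γ < 1) (g : S → ℝ) (s : S) (a : A) :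
    Qgen P π (fun s a => g s - γ * ∑ s', P s a s' * g s') γ s a = g s := by
  have hstep : Function.uncurry (fun s a => g s - γ * ∑ s', P s a s' * g s') =
      (1 - γ • of (saKer P π)) *ᵥ fun p => g p.1 := by
    ext ⟨s, a⟩
    simp only [sub_mulVec, one_mulVec, smul_mulVec, Pi.sub_apply, Pi.smul_apply, saKer_mulVec,
      Function.uncurry_apply_pair, smul_eq_mul, ← Finset.sum_mul, hπ1, one_mul]
  rw [← Function.uncurry_apply_pair (Qgen P π _ γ), uncurry_Qgen hπ hγ0 hγ1, hstep, mulVec_mulVec,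
    discountedOccupancy_mul_one_sub hπ hγ0 hγ1, one_mulVec]

lemma expDisc_eq_add_expDisc_advantage {πt : S → A → ℝ}
    (hπ : of (saKer P π) ∈ rowStochastic ℝ (S × A))
    (hπt : of (saKer P πt) ∈ rowStochastic ℝ (S × A)) (hπt1 : ∀ s, ∑ a, πt s a = 1)
    (hγ0 : 0 ≤ γ) (hγ1 : γ < 1) (μ : S → ℝ) (f : S → A → ℝ) :
    expDisc P πt μ γ f = expDisc P π μ γ f + expDisc P πt μ γ (advantage P π f γ) := by
  have hf : f = advantage P π f γ +
      fun s a => Vgen P π f γ s - γ * ∑ s', P s a s' * Vgen P π f γ s' := by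
    ext s a
    simp only [Pi.add_apply, advantage, Qgen_bellman hπ hγ0 hγ1 f s a]
    ring
  have hQt : ∀ s a, Qgen P πt f γ s a = Qgen P πt (advantage P π f γ) γ s a + Vgen P π f γ s := by
    intro s a
    conv_lhs => rw [hf]
    rw [Qgen_add hπt hγ0 hγ1, Qgen_telescope hπt hπt1 hγ0 hγ1]
  simp only [expDisc, hQt, mul_add, Finset.sum_add_distrib, ← Finset.sum_mul, hπt1, one_mul]
  rw [add_comm]
  rfl

/-- The normalized discounted occupancy measure
`d_π(s, a) = (1 - γ) ∑ₜ γ^t Pr_{τ|π}(s_t = s, a_t = a)`. -/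
noncomputable def occupancyMeasure (P : S → A → S → ℝ) (π : S → A → ℝ) (μ : S → ℝ) (γ : ℝ) :
    S × A → ℝ :=
  (1 - γ) • ((fun p : S × A => μ p.1 * π p.1 p.2) ᵥ* discountedOccupancy (of (saKer P π)) γ)

lemma one_sub_mul_expDisc (hπ : of (saKer P π) ∈ rowStochastic ℝ (S × A)) (hγ0 : 0 ≤ γ)
    (hγ1 : γ < 1) (μ : S → ℝ) (f : S → A → ℝ) :
    (1 - γ) * expDisc P π μ γ f = occupancyMeasure P π μ γ ⬝ᵥ Function.uncurry f := by
  rw [occupancyMeasure, smul_dotProduct, ← dotProduct_mulVec, ← uncurry_Qgen hπ hγ0 hγ1]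
  simp [expDisc, dotProduct, Fintype.sum_prod_type, Finset.mul_sum, mul_assoc]

lemma occupancyMeasure_dotProduct_one (hπ : of (saKer P π) ∈ rowStochastic ℝ (S × A))
    (hπ1 : ∀ s, ∑ a, π s a = 1) (hγ0 : 0 ≤ γ) (hγ1 : γ < 1) {μ : S → ℝ} (hμ1 : ∑ s, μ s = 1) :
    occupancyMeasure P π μ γ ⬝ᵥ 1 = 1 := by
  rw [occupancyMeasure, smul_dotProduct, ← dotProduct_mulVec, ← dotProduct_smul,
    one_sub_smul_discountedOccupancy_mulVec_one hπ hγ0 hγ1, dotProduct_one]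
  simp [Fintype.sum_prod_type, ← Finset.mul_sum, hπ1, hμ1]

lemma one_sub_mul_expDisc_sq_sub (hπ : of (saKer P π) ∈ rowStochastic ℝ (S × A))
    (hπ1 : ∀ s, ∑ a, π s a = 1) (hγ0 : 0 ≤ γ) (hγ1 : γ < 1) {μ : S → ℝ} (hμ1 : ∑ s, μ s = 1)
    (f : S → A → ℝ) (c : ℝ) :
    (1 - γ) * expDisc P π μ γ (fun s a => (f s a - (1 - γ) * expDisc P π μ γ f) ^ 2) =
      (1 - γ) * expDisc P π μ γ (fun s a => (f s a - c) ^ 2) -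
        ((1 - γ) * expDisc P π μ γ f - c) ^ 2 := by
  simp only [one_sub_mul_expDisc hπ hγ0 hγ1]
  exact dotProduct_sq_sub_dotProduct (occupancyMeasure_dotProduct_one hπ hπ1 hγ0 hγ1 hμ1)
    (Function.uncurry f) c

lemma expDisc_sub_const_mul (hπ : of (saKer P π) ∈ rowStochastic ℝ (S × A)) (hγ0 : 0 ≤ γ)
    (hγ1 : γ < 1) (μ : S → ℝ) (f g : S → A → ℝ) (c : ℝ) :
    expDisc P π μ γ (fun s a => f s a - c * g s a) =
      expDisc P π μ γ f - c * expDisc P π μ γ g := by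
  apply mul_left_cancel₀ (sub_ne_zero.2 hγ1.ne')
  rw [mul_sub, mul_left_comm, one_sub_mul_expDisc hπ hγ0 hγ1, one_sub_mul_expDisc hπ hγ0 hγ1,
    one_sub_mul_expDisc hπ hγ0 hγ1, ← smul_eq_mul, ← dotProduct_smul, ← dotProduct_sub]
  rfl

end MDP

theorem stmt_11_general {S A : Type*} [Fintype S] [Fintype A] [DecidableEq S] [DecidableEq A]
    (P : S → A → S → ℝ) (π πt : S → A → ℝ) (R : S → A → ℝ) (γ lam : ℝ) (μ : S → ℝ)
    (hP0 : ∀ s a s', 0 ≤ P s a s') (hP1 : ∀ s a, ∑ s', P s a s' = 1)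
    (hπ0 : ∀ s a, 0 ≤ π s a) (hπ1 : ∀ s, ∑ a, π s a = 1)
    (hπt0 : ∀ s a, 0 ≤ πt s a) (hπt1 : ∀ s, ∑ a, πt s a = 1)
    (hμ1 : ∑ s, μ s = 1)
    (hγ0 : 0 ≤ γ) (hγ1 : γ < 1) (hlam : 0 ≤ lam)
    (Jπ Jπt ν2π ν2πt ηπ ηπt : ℝ)
    (Q : S → A → ℝ) (V : S → ℝ) (X : S → A → ℝ) (W : S → ℝ)
    (Adv AdvL : S → A → ℝ)
    (hJπ : Jπ = (1 - γ) * expDisc P π μ γ R)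
    (hJπt : Jπt = (1 - γ) * expDisc P πt μ γ R)
    (hν2π : ν2π = (1 - γ) * expDisc P π μ γ (fun s a => (R s a - Jπ) ^ 2))
    (hν2πt : ν2πt = (1 - γ) * expDisc P πt μ γ (fun s a => (R s a - Jπt) ^ 2))
    (hηπ : ηπ = Jπ - lam * ν2π) (hηπt : ηπt = Jπt - lam * ν2πt)
    (hQ : ∀ s a, Q s a = Qgen P π R γ s a)
    (hV : ∀ s, V s = ∑ a, π s a * Q s a)
    (hX : ∀ s a, X s a = Qgen P π (fun s' a' => (R s' a' - Jπ) ^ 2) γ s a)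
    (hW : ∀ s, W s = ∑ a, π s a * X s a)
    (hA : ∀ s a, Adv s a = Q s a - V s)
    (hAL : ∀ s a, AdvL s a = Q s a - lam * X s a - (V s - lam * W s)) :
    ηπt ≥ ηπ + (1 - γ) * expDisc P πt μ γ AdvL := by
  have hπM := saKer_mem_rowStochastic hP0 hP1 hπ0 hπ1
  have hπtM := saKer_mem_rowStochastic hP0 hP1 hπt0 hπt1
  have hpdl := expDisc_eq_add_expDisc_advantage hπM hπtM hπt1 hγ0 hγ1 μ
  have hAdv : Adv = advantage P π R γ := by
    ext s a
    simp only [hA, hV, hQ, advantage, Vgen]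
  have hXW : (fun s a => X s a - W s) = advantage P π (fun s a => (R s a - Jπ) ^ 2) γ := by
    ext s a
    simp only [hX, hW, advantage, Vgen]
  have hAdvL : AdvL = fun s a => Adv s a - lam * (X s a - W s) := by
    ext s a
    rw [hAL, hA]
    ring
  have hJ : Jπt = Jπ + (1 - γ) * expDisc P πt μ γ Adv := by
    rw [hJπt, hJπ, hAdv, hpdl]
    ring
  have hν : ν2πt = ν2π + (1 - γ) * expDisc P πt μ γ (fun s a => X s a - W s) - (Jπt - Jπ) ^ 2 := by
    rw [hν2πt, hJπt, one_sub_mul_expDisc_sq_sub hπtM hπt1 hγ0 hγ1 hμ1 R Jπ, ← hJπt, hpdl, hXW, hν2π]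
    ring
  have hgap : ηπt = ηπ + (1 - γ) * expDisc P πt μ γ AdvL + lam * (Jπt - Jπ) ^ 2 := by
    rw [hηπt, hηπ, hν, hAdvL, expDisc_sub_const_mul hπtM hγ0 hγ1]
    linear_combination hJ
  rw [hgap]
  linarith [mul_nonneg hlam (sq_nonneg (Jπt - Jπ))]

/-- Lower bound from the mean-volatility performance difference lemma (λ ≥ 0). -/
theorem stmt_11 {S A : Type*} [Fintype S] [Fintype A] [DecidableEq S] [DecidableEq A]
    (P : S → A → S → ℝ) (π πt : S → A → ℝ) (R : S → A → ℝ) (γ lam : ℝ) (μ : S → ℝ)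
    (hP0 : ∀ s a s', 0 ≤ P s a s') (hP1 : ∀ s a, ∑ s', P s a s' = 1)
    (hπ0 : ∀ s a, 0 ≤ π s a) (hπ1 : ∀ s, ∑ a, π s a = 1)
    (hπt0 : ∀ s a, 0 ≤ πt s a) (hπt1 : ∀ s, ∑ a, πt s a = 1)
    (hμ0 : ∀ s, 0 ≤ μ s) (hμ1 : ∑ s, μ s = 1)
    (hγ0 : 0 ≤ γ) (hγ1 : γ < 1) (hlam : 0 ≤ lam)
    (Jπ Jπt ν2π ν2πt ηπ ηπt : ℝ)
    (Q : S → A → ℝ) (V : S → ℝ) (X : S → A → ℝ) (W : S → ℝ)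
    (Adv AdvL : S → A → ℝ)
    (hJπ : Jπ = (1 - γ) * expDisc P π μ γ R)
    (hJπt : Jπt = (1 - γ) * expDisc P πt μ γ R)
    (hν2π : ν2π = (1 - γ) * expDisc P π μ γ (fun s a => (R s a - Jπ) ^ 2))
    (hν2πt : ν2πt = (1 - γ) * expDisc P πt μ γ (fun s a => (R s a - Jπt) ^ 2))
    (hηπ : ηπ = Jπ - lam * ν2π) (hηπt : ηπt = Jπt - lam * ν2πt)
    (hQ : ∀ s a, Q s a = Qgen P π R γ s a)
    (hV : ∀ s, V s = ∑ a, π s a * Q s a)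
    (hX : ∀ s a, X s a = Qgen P π (fun s' a' => (R s' a' - Jπ) ^ 2) γ s a)
    (hW : ∀ s, W s = ∑ a, π s a * X s a)
    (hA : ∀ s a, Adv s a = Q s a - V s)
    (hAL : ∀ s a, AdvL s a = Q s a - lam * X s a - (V s - lam * W s)) :
    ηπt ≥ ηπ + (1 - γ) * expDisc P πt μ γ AdvL :=
  stmt_11_general P π πt R γ lam μ hP0 hP1 hπ0 hπ1 hπt0 hπt1 hμ1 hγ0 hγ1 hlam Jπ Jπt ν2π ν2πt ηπ ηπt
    Q V X W Adv AdvL hJπ hJπt hν2π hν2πt hηπ hηπt hQ hV hX hW hA hAL
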